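/- arXiv:1612.05910 — 2 statements merged into one kernel-verified Lean document; each statement's English description precedes it below -/
import Mathlib

section
/- (Lemma 1 of the paper, case j = 1.) Let v, w > 0, n_cr > 0 and fix a linearization point n̂_11 with 0 ≤ n̂_11 ≤ n_cr. Define γ_10 = (w+v)·n̂_11, γ_11 = v − (w+v)·n̂_11/n_cr, γ_12 = −(w+v)·n̂_11/n_cr, and the approximation Ō_11(n_11, n_12) = min(v·n_11, γ_10 + γ_11·n_11 + γ_12·n_12). Let O_11(n_11, n_12) = (n_11/(n_11+n_12))·min(v·(n_11+n_12), (w+v)·n_cr − w·(n_11+n_12)). Then for all n_11, n_12 ≥ 0 with 0 < n_11 + n_12 ≤ n_cr, we have Ō_11(n_11, n_12) = O_11(n_11, n_12). -/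
/-! Below the critical accumulation the demand `v n` is the active branch of the exact outflow, so
`O₁₁ = v n₁₁`. The linearization differs from `v n₁₁` by `(w + v) n̂₁₁ (1 - n / n_cr)`, which is
nonnegative there, so the minimum defining `Ō₁₁` also selects `v n₁₁`. -/

lemma min_demand_supply_eq_demand {v w ncr n : ℝ} (hwv : 0 ≤ w + v) (hn : n ≤ ncr) :
    min (v * n) ((w + v) * ncr - w * n) = v * n :=
  min_eq_left (by nlinarith)

lemma linearization_eq_add_correction (v w ncr nhat n11 n12 : ℝ) :
    (w + v) * nhat + (v - (w + v) * nhat / ncr) * n11 + -((w + v) * nhat / ncr) * n12 =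
      v * n11 + (w + v) * nhat * (1 - (n11 + n12) / ncr) := by
  ring

lemma linearization_correction_nonneg {v w ncr nhat n : ℝ} (hwv : 0 ≤ w + v) (hncr : 0 < ncr)
    (hnhat : 0 ≤ nhat) (hn : n ≤ ncr) : 0 ≤ (w + v) * nhat * (1 - n / ncr) :=
  mul_nonneg (mul_nonneg hwv hnhat) (sub_nonneg.2 (div_le_one_of_le₀ hn hncr.le))

theorem lemma1_case_j1_general (v w ncr : ℝ) (hv : 0 < v) (hw : 0 < w) (hncr : 0 < ncr)
    (nhat11 : ℝ) (hhat0 : 0 ≤ nhat11)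
    (γ10 γ11 γ12 : ℝ)
    (hγ10 : γ10 = (w + v) * nhat11)
    (hγ11 : γ11 = v - (w + v) * nhat11 / ncr)
    (hγ12 : γ12 = -((w + v) * nhat11 / ncr))
    (Obar O : ℝ → ℝ → ℝ)
    (hObar : ∀ n11 n12, Obar n11 n12 = min (v * n11) (γ10 + γ11 * n11 + γ12 * n12))
    (hO : ∀ n11 n12, O n11 n12 =
      (n11 / (n11 + n12)) * min (v * (n11 + n12)) ((w + v) * ncr - w * (n11 + n12))) :
    ∀ n11 n12 : ℝ, 0 ≤ n11 → 0 ≤ n12 → 0 < n11 + n12 → n11 + n12 ≤ ncr →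
      Obar n11 n12 = O n11 n12 := by
  intro n11 n12 _ _ hpos hle
  have hwv : 0 ≤ w + v := by linarith
  have hO_eq : O n11 n12 = v * n11 := by
    rw [hO, min_demand_supply_eq_demand hwv hle]
    field_simp
  rw [hO_eq, hObar, hγ10, hγ11, hγ12, linearization_eq_add_correction]
  exact min_eq_left (le_add_of_nonneg_right
    (linearization_correction_nonneg hwv hncr hhat0 hle))

theorem lemma1_case_j1 (v w ncr : ℝ) (hv : 0 < v) (hw : 0 < w) (hncr : 0 < ncr)
    (nhat11 : ℝ) (hhat0 : 0 ≤ nhat11) (hhat1 : nhat11 ≤ ncr)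
    (γ10 γ11 γ12 : ℝ)
    (hγ10 : γ10 = (w + v) * nhat11)
    (hγ11 : γ11 = v - (w + v) * nhat11 / ncr)
    (hγ12 : γ12 = -((w + v) * nhat11 / ncr))
    (Obar O : ℝ → ℝ → ℝ)
    (hObar : ∀ n11 n12, Obar n11 n12 = min (v * n11) (γ10 + γ11 * n11 + γ12 * n12))
    (hO : ∀ n11 n12, O n11 n12 =
      (n11 / (n11 + n12)) * min (v * (n11 + n12)) ((w + v) * ncr - w * (n11 + n12))) :
    ∀ n11 n12 : ℝ, 0 ≤ n11 → 0 ≤ n12 → 0 < n11 + n12 → n11 + n12 ≤ ncr →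
      Obar n11 n12 = O n11 n12 :=
  lemma1_case_j1_general v w ncr hv hw hncr nhat11 hhat0 γ10 γ11 γ12 hγ10 hγ11 hγ12 Obar O hObar hO
end

section
/- (Lemma 1 of the paper, case j = 2.) Let v, w > 0, n_cr > 0 and fix 0 ≤ n̂_12 ≤ n_cr. Define γ_20 = (w+v)·n̂_12, γ_21 = −(w+v)·n̂_12/n_cr, γ_22 = v − (w+v)·n̂_12/n_cr, and Ō_12(n_11, n_12) = min(v·n_12, γ_20 + γ_21·n_11 + γ_22·n_12). Let O_12(n_11, n_12) = (n_12/(n_11+n_12))·min(v·(n_11+n_12), (w+v)·n_cr − w·(n_11+n_12)). Then for all n_11, n_12 ≥ 0 with 0 < n_11 + n_12 ≤ n_cr, Ō_12(n_11, n_12) = O_12(n_11, n_12). -/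
/-!
Since `n₁₁ + n₁₂ ≤ n_cr`, the free-flow branch `v (n₁₁ + n₁₂)` is the smaller one in `O₁₂`, so
`O₁₂ = v n₁₂`. The linearization exceeds `v n₁₂` by `(w + v) n̂₁₂ (1 - (n₁₁ + n₁₂) / n_cr) ≥ 0`,
so `Ō₁₂ = v n₁₂` as well.
-/

lemma min_free_flow_eq_left {v w ncr s : ℝ} (hwv : 0 ≤ w + v) (hs : s ≤ ncr) :
    min (v * s) ((w + v) * ncr - w * s) = v * s :=
  min_eq_left (by nlinarith)

lemma proportional_share_mul {a s c : ℝ} (hs : s ≠ 0) : a / s * (c * s) = c * a := by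
  field_simp

lemma linearization_eq_add_excess (v w ncr nhat n11 n12 : ℝ) :
    (w + v) * nhat + -((w + v) * nhat / ncr) * n11 + (v - (w + v) * nhat / ncr) * n12 =
      v * n12 + (w + v) * nhat * (1 - (n11 + n12) / ncr) := by
  ring

lemma excess_nonneg {v w ncr nhat s : ℝ} (hwv : 0 ≤ w + v) (hncr : 0 < ncr) (hnhat : 0 ≤ nhat)
    (hs : s ≤ ncr) : 0 ≤ (w + v) * nhat * (1 - s / ncr) := by
  have : 0 ≤ 1 - s / ncr := sub_nonneg.mpr ((div_le_one hncr).mpr hs)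
  positivity

theorem lemma1_case_j2_general (v w ncr : ℝ) (hv : 0 < v) (hw : 0 < w) (hncr : 0 < ncr)
    (nhat12 : ℝ) (hhat0 : 0 ≤ nhat12)
    (γ20 γ21 γ22 : ℝ)
    (hγ20 : γ20 = (w + v) * nhat12)
    (hγ21 : γ21 = -((w + v) * nhat12 / ncr))
    (hγ22 : γ22 = v - (w + v) * nhat12 / ncr)
    (Obar O : ℝ → ℝ → ℝ)
    (hObar : ∀ n11 n12, Obar n11 n12 = min (v * n12) (γ20 + γ21 * n11 + γ22 * n12))
    (hO : ∀ n11 n12, O n11 n12 =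
      (n12 / (n11 + n12)) * min (v * (n11 + n12)) ((w + v) * ncr - w * (n11 + n12))) :
    ∀ n11 n12 : ℝ, 0 ≤ n11 → 0 ≤ n12 → 0 < n11 + n12 → n11 + n12 ≤ ncr →
      Obar n11 n12 = O n11 n12 := by
  intro n11 n12 _ _ hs hsn
  have hwv : 0 ≤ w + v := by linarith
  rw [hObar, hO, hγ20, hγ21, hγ22, min_free_flow_eq_left hwv hsn,
    proportional_share_mul hs.ne', linearization_eq_add_excess]
  exact min_eq_left (le_add_of_nonneg_right (excess_nonneg hwv hncr hhat0 hsn))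

theorem lemma1_case_j2 (v w ncr : ℝ) (hv : 0 < v) (hw : 0 < w) (hncr : 0 < ncr)
    (nhat12 : ℝ) (hhat0 : 0 ≤ nhat12) (hhat1 : nhat12 ≤ ncr)
    (γ20 γ21 γ22 : ℝ)
    (hγ20 : γ20 = (w + v) * nhat12)
    (hγ21 : γ21 = -((w + v) * nhat12 / ncr))
    (hγ22 : γ22 = v - (w + v) * nhat12 / ncr)
    (Obar O : ℝ → ℝ → ℝ)
    (hObar : ∀ n11 n12, Obar n11 n12 = min (v * n12) (γ20 + γ21 * n11 + γ22 * n12))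
    (hO : ∀ n11 n12, O n11 n12 =
      (n12 / (n11 + n12)) * min (v * (n11 + n12)) ((w + v) * ncr - w * (n11 + n12))) :
    ∀ n11 n12 : ℝ, 0 ≤ n11 → 0 ≤ n12 → 0 < n11 + n12 → n11 + n12 ≤ ncr →
      Obar n11 n12 = O n11 n12 :=
  lemma1_case_j2_general v w ncr hv hw hncr nhat12 hhat0 γ20 γ21 γ22 hγ20 hγ21 hγ22 Obar O hObar hO
end
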